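/- Let X be a connected, non-compact, locally connected, locally compact Hausdorff space and let K ⊆ X be a compact subspace. Define K̂ := X ∖ ⋃{U : U is an unbounded connected component of X∖K}. Then K̂ is compact. -/

import Mathlib

/-!
Choose a compact neighbourhood `L` of `K`. A component of `X \ K` not contained in `L` cannot
lie entirely outside `L`: its frontier would lie in `K ⊆ interior L`, making it a nonempty clopen
proper subset of the connected space `X`. So it meets the compact set `frontier L`, which is
covered by finitely many of the (open) components of `X \ K`. Hence `K̂` lies in `L` together
with the closures of finitely many bounded components, a compact set, and `K̂` is closed.
-/

open Set

section

variable {X : Type*} [TopologicalSpace X]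

theorem IsPreconnected.inter_frontier_nonempty {s t : Set X} (hs : IsPreconnected s)
    (hst : (s ∩ t).Nonempty) (hst' : (s \ t).Nonempty) : (s ∩ frontier t).Nonempty := by
  by_contra! hfr
  have hsplit : s ⊆ interior t ∪ (closure t)ᶜ := fun x hx ↦ by
    by_contra! hx'
    rw [mem_union, mem_compl_iff, not_or, not_not] at hx'
    exact hfr.subset ⟨hx, hx'.2, hx'.1⟩
  obtain ⟨x, hxs, hxt⟩ := hst
  obtain ⟨y, hys, hyt⟩ := hst'
  have hxi : x ∈ interior t := (hsplit hxs).resolve_right (· (subset_closure hxt))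
  have hyc : y ∈ (closure t)ᶜ := (hsplit hys).resolve_left (hyt <| interior_subset ·)
  obtain ⟨z, -, hzi, hzc⟩ :=
    hs _ _ isOpen_interior isClosed_closure.isOpen_compl hsplit ⟨x, hxs, hxi⟩ ⟨y, hys, hyc⟩
  exact hzc (subset_closure (interior_subset hzi))

theorem frontier_connectedComponentIn_subset_compl [LocallyConnectedSpace X] {O : Set X}
    (hO : IsOpen O) (x : X) : frontier (connectedComponentIn O x) ⊆ Oᶜ := by
  intro z hz hzO
  rw [hO.connectedComponentIn.frontier_eq] at hz
  obtain ⟨w, hwz, hwx⟩ := mem_closure_iff.mp hz.1 _ hO.connectedComponentIn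
    (mem_connectedComponentIn hzO)
  have hcomp : connectedComponentIn O z = connectedComponentIn O x :=
    (connectedComponentIn_eq hwz).trans (connectedComponentIn_eq hwx).symm
  exact hz.2 (hcomp ▸ mem_connectedComponentIn hzO)

theorem connectedComponentIn_compl_inter_frontier_nonempty [ConnectedSpace X]
    [LocallyConnectedSpace X] {K L : Set X} (hK : IsClosed K) (hKL : K ⊆ interior L)
    (hL : L.Nonempty) {y : X} (hyL : y ∉ L) :
    (connectedComponentIn Kᶜ y ∩ frontier L).Nonempty := by
  have hyK : y ∈ Kᶜ := fun h ↦ hyL (interior_subset (hKL h))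
  set C := connectedComponentIn Kᶜ y
  have hyC : y ∈ C := mem_connectedComponentIn hyK
  by_cases hCL : (C ∩ L).Nonempty
  · exact isPreconnected_connectedComponentIn.inter_frontier_nonempty hCL ⟨y, hyC, hyL⟩
  have hCLc : C ⊆ Lᶜ := fun z hzC hzL ↦ hCL ⟨z, hzC, hzL⟩
  have hfrC : frontier C = ∅ := by
    refine eq_empty_of_forall_notMem fun z hz ↦ ?_
    have hzK : z ∈ K :=
      not_not.mp (frontier_connectedComponentIn_subset_compl hK.isOpen_compl y hz)
    have hzL : z ∈ (interior L)ᶜ := closure_compl (s := L) ▸ closure_mono hCLc hz.1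
    exact hzL (hKL hzK)
  rcases frontier_eq_empty_iff.mp hfrC with hC | hC
  · exact absurd hyC (hC ▸ notMem_empty y)
  · obtain ⟨x, hx⟩ := hL
    exact (hCLc (hC ▸ mem_univ x) hx).elim

def unboundedComponents (K : Set X) : Set (Set X) :=
  {U | (∃ x ∈ Kᶜ, U = connectedComponentIn Kᶜ x) ∧ ¬ IsCompact (closure U)}

theorem isClosed_compl_sUnion_unboundedComponents [LocallyConnectedSpace X] {K : Set X}
    (hK : IsClosed K) : IsClosed (⋃₀ unboundedComponents K)ᶜ := by
  refine (isOpen_sUnion ?_).isClosed_compl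
  rintro U ⟨⟨x, -, rfl⟩, -⟩
  exact hK.isOpen_compl.connectedComponentIn

theorem isCompact_closure_connectedComponentIn_of_notMem_sUnion {K : Set X} {y : X}
    (hyK : y ∈ Kᶜ) (hy : y ∉ ⋃₀ unboundedComponents K) :
    IsCompact (closure (connectedComponentIn Kᶜ y)) := by
  by_contra h
  exact hy ⟨_, ⟨⟨y, hyK, rfl⟩, h⟩, mem_connectedComponentIn hyK⟩

theorem compl_sUnion_unboundedComponents_subset [ConnectedSpace X] [LocallyConnectedSpace X]
    {K L t : Set X} (hK : IsClosed K) (hKL : K ⊆ interior L) (hL : L.Nonempty)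
    (ht : frontier L ⊆ ⋃ y ∈ t, connectedComponentIn Kᶜ y) :
    (⋃₀ unboundedComponents K)ᶜ ⊆
      L ∪ ⋃ y ∈ {y ∈ t | IsCompact (closure (connectedComponentIn Kᶜ y))},
        closure (connectedComponentIn Kᶜ y) := by
  intro y hy
  by_cases hyL : y ∈ L
  · exact Or.inl hyL
  have hyK : y ∈ Kᶜ := fun h ↦ hyL (interior_subset (hKL h))
  obtain ⟨z, hzy, hzL⟩ := connectedComponentIn_compl_inter_frontier_nonempty hK hKL hL hyL
  obtain ⟨y₀, hy₀t, hzy₀⟩ := mem_iUnion₂.mp (ht hzL)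
  have hcomp : connectedComponentIn Kᶜ y₀ = connectedComponentIn Kᶜ y :=
    (connectedComponentIn_eq hzy₀).trans (connectedComponentIn_eq hzy).symm
  refine Or.inr (mem_biUnion (x := y₀) ⟨hy₀t, ?_⟩ ?_) <;> rw [hcomp]
  · exact isCompact_closure_connectedComponentIn_of_notMem_sUnion hyK hy
  · exact subset_closure (mem_connectedComponentIn hyK)

end

theorem hatK_isCompact_general {X : Type*} [TopologicalSpace X]
    [ConnectedSpace X] [LocallyConnectedSpace X] [LocallyCompactSpace X]
    [T2Space X] {K : Set X} (hK : IsCompact K) :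
    IsCompact
      (⋃₀ {U : Set X | (∃ x ∈ Kᶜ, U = connectedComponentIn Kᶜ x) ∧ ¬ IsCompact (closure U)})ᶜ := by
  obtain ⟨x₀⟩ : Nonempty X := inferInstance
  obtain ⟨L, hL, hKL⟩ := exists_compact_superset (hK.union (isCompact_singleton (x := x₀)))
  have hKL' : K ⊆ interior L := subset_union_left.trans hKL
  have hLne : L.Nonempty := ⟨x₀, interior_subset (hKL (Or.inr rfl))⟩
  have hfr : IsCompact (frontier L) :=
    hL.of_isClosed_subset isClosed_frontier
      (frontier_subset_closure.trans hL.isClosed.closure_subset)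
  obtain ⟨t, -, ht⟩ := hfr.elim_nhds_subcover (connectedComponentIn Kᶜ) fun y hy ↦
    hK.isClosed.isOpen_compl.connectedComponentIn.mem_nhds
      (mem_connectedComponentIn fun hyK ↦ hy.2 (hKL' hyK))
  exact (hL.union ((t.finite_toSet.sep _).isCompact_biUnion fun _ hy ↦ hy.2)).of_isClosed_subset
    (isClosed_compl_sUnion_unboundedComponents hK.isClosed)
    (compl_sUnion_unboundedComponents_subset hK.isClosed hKL' hLne ht)

/-- Let `X` be a connected, non-compact, locally connected, locally compact
Hausdorff space and `K ⊆ X` a compact subspace.  Define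
`K̂ := X \ ⋃ {U : U is an unbounded connected component of X \ K}` (a component is unbounded
if its closure in `X` is not compact).  Then `K̂` is compact. -/
theorem hatK_isCompact {X : Type*} [TopologicalSpace X]
    [ConnectedSpace X] [NoncompactSpace X] [LocallyConnectedSpace X] [LocallyCompactSpace X]
    [T2Space X] {K : Set X} (hK : IsCompact K) :
    IsCompact
      (⋃₀ {U : Set X | (∃ x ∈ Kᶜ, U = connectedComponentIn Kᶜ x) ∧ ¬ IsCompact (closure U)})ᶜ :=
  hatK_isCompact_general hK
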